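/- arXiv:1511.04846 — 2 statements merged into one kernel-verified Lean document; each statement's English description precedes it below -/
import Mathlib

section
/- Safe replacement for the short-circuiting segment checker: for every one-hole context c and all bounds lo, hi, hlo, hhi, helo, hehi, elo, ehi in α, if bstSeg c hlo hhi helo hehi holds and segsc c lo hi hlo hhi helo hehi elo ehi holds, then bstSeg c lo hi elo ehi holds. -/
inductive BTree (α : Type*) where
  | nil : BTree α
  | node : α → BTree α → BTree α → BTree α

variable {α : Type*} [LinearOrder α]

def bst : BTree α → α → α → Prop
  | .nil, _, _ => True
  | .node v l r, lo, hi => lo ≤ v ∧ v < hi ∧ bst l lo v ∧ bst r v hi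

def bstsc : BTree α → α → α → α → α → Prop
  | n, lo, hi, hlo, hhi =>
    if lo = hlo ∧ hi = hhi then True
    else
      match n with
      | .nil => True
      | .node v l r => lo ≤ v ∧ v < hi ∧ bstsc l lo v hlo v ∧ bstsc r v hi v hhi

inductive Ctx (α : Type*) where
  | hole : Ctx α
  | nodeL : α → Ctx α → BTree α → Ctx α
  | nodeR : α → BTree α → Ctx α → Ctx α

def fill {α : Type*} : Ctx α → BTree α → BTree α
  | .hole, s => s
  | .nodeL v c r, s => .node v (fill c s) r
  | .nodeR v l c, s => .node v l (fill c s)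

def bstSeg : Ctx α → α → α → α → α → Prop
  | .hole, lo, hi, elo, ehi => lo = elo ∧ hi = ehi
  | .nodeL v c r, lo, hi, elo, ehi => lo ≤ v ∧ v < hi ∧ bstSeg c lo v elo ehi ∧ bst r v hi
  | .nodeR v l c, lo, hi, elo, ehi => lo ≤ v ∧ v < hi ∧ bst l lo v ∧ bstSeg c v hi elo ehi

inductive segsc : Ctx α → α → α → α → α → α → α → α → α → Prop
  | short (c : Ctx α) (lo hi hlo hhi helo hehi : α) :
      lo = hlo → hi = hhi → segsc c lo hi hlo hhi helo hehi helo hehi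
  | hole (lo hi hlo hhi helo hehi : α) :
      segsc Ctx.hole lo hi hlo hhi helo hehi lo hi
  | left {v : α} {c : Ctx α} {r : BTree α} {lo hi hlo hhi helo hehi elo ehi : α} :
      lo ≤ v → v < hi → bstsc r v hi v hhi →
      segsc c lo v hlo v helo hehi elo ehi →
      segsc (Ctx.nodeL v c r) lo hi hlo hhi helo hehi elo ehi
  | right {v : α} {l : BTree α} {c : Ctx α} {lo hi hlo hhi helo hehi elo ehi : α} :
      lo ≤ v → v < hi → bstsc l lo v hlo v →
      segsc c v hi v hhi helo hehi elo ehi →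
      segsc (Ctx.nodeR v l c) lo hi hlo hhi helo hehi elo ehi


theorem bstsc_safe : ∀ (t : BTree α) (lo hi hlo hhi : α),
    bst t hlo hhi → bstsc t lo hi hlo hhi → bst t lo hi := by
  intro t
  induction t with
  | nil => intro lo hi hlo hhi _ _; trivial
  | node v l r ihl ihr =>
    intro lo hi hlo hhi hb hsc
    rw [bstsc] at hsc
    split at hsc
    · rcases ‹lo = hlo ∧ hi = hhi› with ⟨rfl, rfl⟩; exact hb
    · obtain ⟨h1, h2, h3, h4⟩ := hsc
      obtain ⟨_, _, hbl, hbr⟩ := hb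
      exact ⟨h1, h2, ihl _ _ _ _ hbl h3, ihr _ _ _ _ hbr h4⟩

theorem segsc_safe_replacement (c : Ctx α) (lo hi hlo hhi helo hehi elo ehi : α)
    (h : bstSeg c hlo hhi helo hehi)
    (hsc : segsc c lo hi hlo hhi helo hehi elo ehi) :
    bstSeg c lo hi elo ehi := by
  induction hsc with
  | short c lo hi hlo hhi helo hehi h1 h2 => subst h1; subst h2; exact h
  | hole => exact ⟨rfl, rfl⟩
  | left h1 h2 h3 _ ih =>
    obtain ⟨_, _, hseg, hbr⟩ := h
    exact ⟨h1, h2, ih hseg, bstsc_safe _ _ _ _ _ hbr h3⟩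
  | right h1 h2 h3 _ ih =>
    obtain ⟨_, _, hbl, hseg⟩ := h
    exact ⟨h1, h2, bstsc_safe _ _ _ _ _ hbl h3, ih hseg⟩
end

section
/- Soundness of the synthesized short-circuiting validation of excisemin: for every one-hole context c, values vp, v1 in α, binary trees a3, a4, and bounds lo, hi, u1, u2, elo, ehi in α, if the statically proven invariant holds — bstSeg c lo hi u1 u2, bst a3 v1 vp, and bst a4 vp u2 — and the synthesized dynamic checks hold — segsc c lo hi lo hi u1 u2 elo ehi, elo ≤ vp, vp < ehi, bstsc a3 elo vp v1 vp, and bstsc a4 vp ehi vp u2 — then bst (fill c (node vp a3 a4)) lo hi holds. -/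
variable {α : Type*} [LinearOrder α]

theorem bstsc_sound (t : BTree α) (lo hi hlo hhi : α)
    (hb : bst t hlo hhi) (hc : bstsc t lo hi hlo hhi) : bst t lo hi := by
  induction t generalizing lo hi hlo hhi with
  | nil => trivial
  | node v l r ihl ihr =>
    rw [bstsc] at hc
    split at hc
    · obtain ⟨h1, h2⟩ := ‹lo = hlo ∧ hi = hhi›
      subst h1; subst h2; exact hb
    · obtain ⟨hb1, hb2, hb3, hb4⟩ := hb
      obtain ⟨hc1, hc2, hc3, hc4⟩ := hc
      exact ⟨hc1, hc2, ihl lo v hlo v hb3 hc3, ihr v hi v hhi hb4 hc4⟩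

theorem fill_sound (c : Ctx α) (s : BTree α) (lo hi elo ehi : α)
    (hseg : bstSeg c lo hi elo ehi) (hs : bst s elo ehi) :
    bst (fill c s) lo hi := by
  induction c generalizing lo hi with
  | hole => obtain ⟨h1, h2⟩ := hseg; subst h1; subst h2; exact hs
  | nodeL v c' r ih =>
    obtain ⟨h1, h2, h3, h4⟩ := hseg
    exact ⟨h1, h2, ih lo v h3, h4⟩
  | nodeR v l c' ih =>
    obtain ⟨h1, h2, h3, h4⟩ := hseg
    exact ⟨h1, h2, h3, ih v hi h4⟩

theorem seg_sound (c : Ctx α) (s : BTree α) (lo hi hlo hhi helo hehi elo ehi : α)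
    (hsc : segsc c lo hi hlo hhi helo hehi elo ehi)
    (hseg : bstSeg c hlo hhi helo hehi) (hs : bst s elo ehi) :
    bst (fill c s) lo hi := by
  induction hsc with
  | short c lo hi hlo hhi helo hehi h1 h2 =>
    subst h1; subst h2; exact fill_sound c s lo hi helo hehi hseg hs
  | hole => exact hs
  | left h1 h2 h3 _ ih =>
    obtain ⟨g1, g2, g3, g4⟩ := hseg
    exact ⟨h1, h2, ih g3 hs, bstsc_sound _ _ _ _ _ g4 h3⟩
  | right h1 h2 h3 _ ih =>
    obtain ⟨g1, g2, g3, g4⟩ := hseg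
    exact ⟨h1, h2, bstsc_sound _ _ _ _ _ g3 h3, ih g4 hs⟩

theorem excisemin_sound (c : Ctx α) (vp v1 : α) (a3 a4 : BTree α)
    (lo hi u1 u2 elo ehi : α)
    (hseg : bstSeg c lo hi u1 u2)
    (h3 : bst a3 v1 vp) (h4 : bst a4 vp u2)
    (hsc : segsc c lo hi lo hi u1 u2 elo ehi)
    (hlo : elo ≤ vp) (hhi : vp < ehi)
    (hsc3 : bstsc a3 elo vp v1 vp) (hsc4 : bstsc a4 vp ehi vp u2) :
    bst (fill c (BTree.node vp a3 a4)) lo hi := by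
  exact seg_sound c _ lo hi lo hi u1 u2 elo ehi hsc hseg
    ⟨hlo, hhi, bstsc_sound _ _ _ _ _ h3 hsc3, bstsc_sound _ _ _ _ _ h4 hsc4⟩
end
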